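/- arXiv:2212.13502 — 3 statements merged into one kernel-verified Lean document; each statement's English description precedes it below -/
import Mathlib

section
/- For every α ∈ (0,2), the density of the standard symmetric α-stable distribution satisfies lim_{x→∞} x^{α+1} · f_α(x) = α·c_α, where c_α = sin(πα/2)·Γ(α)/π. -/
open Real Filter Set Topology MeasureTheory

set_option maxHeartbeats 1000000

/-- Density of the standard symmetric α-stable distribution `S(α,0,1,0)`:
`f_α(x) = (1/π) ∫₀^∞ cos(x t) · exp(−t^α) dt`. -/
noncomputable def stableDensity (α : ℝ) (x : ℝ) : ℝ :=
  (1 / π) * ∫ t in Set.Ioi (0 : ℝ), Real.cos (x * t) * Real.exp (-(t ^ α))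

lemma intOn_rpow_exp {p q b : ℝ} (hp : 0 < p) (hq : -1 < q) (hb : 0 < b) :
    IntegrableOn (fun x : ℝ => x ^ q * Real.exp (-(b * x ^ p))) (Ioi 0) := by
  have h1 : IntegrableOn (fun y : ℝ => Real.exp (-y) * y ^ ((q + 1) / p - 1)) (Ioi 0) :=
    Real.GammaIntegral_convergent (div_pos (by linarith) hp)
  have h2 : IntegrableOn (fun y : ℝ =>
      Real.exp (-(b * y)) * (b * y) ^ ((q + 1) / p - 1)) (Ioi 0) := by
    have := (integrableOn_Ioi_comp_mul_left_iff
      (fun y : ℝ => Real.exp (-y) * y ^ ((q + 1) / p - 1)) 0 hb).mpr (by simpa using h1)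
    simpa using this
  have h3 : IntegrableOn (fun y : ℝ => y ^ ((q + 1) / p - 1) * Real.exp (-(b * y))) (Ioi 0) := by
    refine IntegrableOn.congr_fun (h2.const_mul (b ^ (1 - (q + 1) / p)))
      (fun y hy => ?_) measurableSet_Ioi
    rw [mem_Ioi] at hy
    rw [Real.mul_rpow hb.le hy.le]
    rw [show b ^ (1 - (q + 1) / p) * (Real.exp (-(b * y)) *
        (b ^ ((q + 1) / p - 1) * y ^ ((q + 1) / p - 1))) =
        (b ^ (1 - (q + 1) / p) * b ^ ((q + 1) / p - 1)) *
        (y ^ ((q + 1) / p - 1) * Real.exp (-(b * y))) by ring, ← Real.rpow_add hb]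
    norm_num
  rw [← integrableOn_Ioi_comp_rpow_iff' _ hp.ne'] at h3
  refine h3.congr_fun (fun x hx => ?_) measurableSet_Ioi
  rw [mem_Ioi] at hx
  beta_reduce
  rw [smul_eq_mul, ← Real.rpow_mul hx.le, ← mul_assoc, ← Real.rpow_add hx]
  congr 2
  field_simp
  ring

/-- `x^s * exp(-b*x^p) → 0` as `x → ∞`, for `b, p > 0`. -/
lemma tendsto_rpow_mul_exp_neg_mul_rpow_atTop (s : ℝ) {b p : ℝ} (hb : 0 < b) (hp : 0 < p) :
    Tendsto (fun x : ℝ => x ^ s * Real.exp (-b * x ^ p)) atTop (𝓝 0) := by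
  have h1 : Tendsto (fun y : ℝ => y ^ (s / p) * Real.exp (-b * y)) atTop (𝓝 0) :=
    tendsto_rpow_mul_exp_neg_mul_atTop_nhds_zero _ _ hb
  have h2 := h1.comp (tendsto_rpow_atTop hp)
  refine h2.congr' ?_
  filter_upwards [eventually_gt_atTop 0] with x hx
  simp only [Function.comp_apply]
  rw [← Real.rpow_mul hx.le]
  congr 2
  field_simp

/-- `‖exp(-w) - 1‖ ≤ ‖w‖` when `0 ≤ w.re`. -/
lemma norm_exp_neg_sub_one_le {w : ℂ} (hw : 0 ≤ w.re) :
    ‖Complex.exp (-w) - 1‖ ≤ ‖w‖ := by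
  have key : Complex.exp (-w) - 1 = ∫ t in (0:ℝ)..1, (-w) * Complex.exp (-(t • w)) := by
    have : ∀ t ∈ Set.uIcc (0:ℝ) 1, HasDerivAt (fun t : ℝ => Complex.exp (-(t • w)))
        ((-w) * Complex.exp (-(t • w))) t := by
      intro t _
      have h1 : HasDerivAt (fun t : ℝ => -(t • w)) (-w) t := by
        exact (((hasDerivAt_id t).smul_const w).neg).congr_deriv (by simp)
      simpa [mul_comm] using h1.cexp
    rw [intervalIntegral.integral_eq_sub_of_hasDerivAt this ?_]
    · simp
    · apply Continuous.intervalIntegrable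
      continuity
  rw [key]
  have := intervalIntegral.norm_integral_le_of_norm_le_const
    (C := ‖w‖) (a := (0:ℝ)) (b := 1)
    (f := fun t => (-w) * Complex.exp (-(t • w))) ?_
  · simpa using this
  · intro t ht
    rw [Set.uIoc_of_le (by norm_num : (0:ℝ) ≤ 1)] at ht
    rw [norm_mul, norm_neg, Complex.norm_exp]
    have : (-(t • w)).re = -(t * w.re) := by simp
    rw [this]
    calc ‖w‖ * Real.exp (-(t * w.re)) ≤ ‖w‖ * 1 := by
          apply mul_le_mul_of_nonneg_left _ (norm_nonneg _)
          rw [Real.exp_le_one_iff]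
          have : 0 ≤ t * w.re := mul_nonneg ht.1.le hw
          linarith
      _ = ‖w‖ := mul_one _

lemma integrableOn_cexp_neg_smul {s : ℂ} (hs : 0 < s.re) :
    IntegrableOn (fun r : ℝ => Complex.exp (-(s * r))) (Ioi 0) := by
  refine Integrable.mono' (g := fun r => Real.exp (-s.re * r))
    (exp_neg_integrableOn_Ioi 0 hs) ?_ ?_
  · exact (Continuous.aestronglyMeasurable (by continuity))
  · filter_upwards with r
    rw [Complex.norm_exp]
    simp [mul_comm]

lemma integral_cexp_neg_smul {s : ℂ} (hs : 0 < s.re) :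
    ∫ r in Ioi (0:ℝ), Complex.exp (-(s * r)) = 1 / s := by
  have hsne : s ≠ 0 := fun h => by simp [h] at hs
  have key := integral_Ioi_of_hasDerivAt_of_tendsto (a := (0:ℝ)) (m := 0)
    (f := fun r : ℝ => -s⁻¹ * Complex.exp (-(s * r)))
    (f' := fun r : ℝ => Complex.exp (-(s * r))) ?_ ?_ (integrableOn_cexp_neg_smul hs) ?_
  · rw [key]; simp [hsne, one_div]
  · exact (Continuous.continuousWithinAt (by continuity))
  · intro r _
    have h1 : HasDerivAt (fun r : ℝ => -(s * r)) (-s) r := by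
      exact ((Complex.ofRealCLM.hasDerivAt.const_mul s).neg).congr_deriv (by simp)
    have := (h1.cexp).const_mul (-s⁻¹)
    refine this.congr_deriv ?_
    rw [mul_comm _ (-s), ← mul_assoc, neg_mul_neg, inv_mul_cancel₀ hsne, one_mul]
  · rw [show (0:ℂ) = -s⁻¹ * 0 by ring]
    apply Tendsto.const_mul
    rw [tendsto_zero_iff_norm_tendsto_zero]
    have h2 : ∀ r : ℝ, ‖Complex.exp (-(s * r))‖ = Real.exp (-(s.re * r)) := fun r => by
      rw [Complex.norm_exp]; simp
    rw [tendsto_congr h2]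
    have h3 : Tendsto (fun r : ℝ => s.re * r) atTop atTop := by
      exact Tendsto.const_mul_atTop hs tendsto_id
    exact tendsto_exp_neg_atTop_nhds_zero.comp h3

/-- Generic rotation lemma: if the family of integrals `g φ = ∫_{r>0} E φ r` has
`∂_φ E = i ∂_r P` with `P` vanishing at both ends, uniform domination on `[θ₁, θ₂]`,
then `g θ₁ = g θ₂`. -/
lemma rotation_of_deriv_zero {θ₁ θ₂ : ℝ} (hθ : θ₁ < θ₂)
    (E Q P : ℝ → ℝ → ℂ) (bE bQ : ℝ → ℝ)
    (hbE : IntegrableOn bE (Ioi 0))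
    (hbQ : IntegrableOn bQ (Ioi 0))
    (hEcontr : ∀ φ ∈ Icc θ₁ θ₂, ContinuousOn (fun r => E φ r) (Ioi 0))
    (hQcontr : ∀ φ ∈ Ioo θ₁ θ₂, ContinuousOn (fun r => Q φ r) (Ioi 0))
    (hEbound : ∀ φ ∈ Icc θ₁ θ₂, ∀ r ∈ Ioi (0:ℝ), ‖E φ r‖ ≤ bE r)
    (hQbound : ∀ φ ∈ Icc θ₁ θ₂, ∀ r ∈ Ioi (0:ℝ), ‖Q φ r‖ ≤ bQ r)
    (hEcontφ : ∀ r ∈ Ioi (0:ℝ), Continuous (fun φ => E φ r))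
    (hderivφ : ∀ r ∈ Ioi (0:ℝ), ∀ φ ∈ Ioo θ₁ θ₂, HasDerivAt (fun ψ => E ψ r) (Q φ r) φ)
    (hderivr : ∀ φ ∈ Ioo θ₁ θ₂, ∀ r ∈ Ioi (0:ℝ), HasDerivAt (P φ) (Complex.I⁻¹ * Q φ r) r)
    (hP0 : ∀ φ ∈ Ioo θ₁ θ₂, ContinuousWithinAt (P φ) (Ici 0) 0)
    (hP00 : ∀ φ ∈ Ioo θ₁ θ₂, P φ 0 = 0)
    (hPtop : ∀ φ ∈ Ioo θ₁ θ₂, Tendsto (P φ) atTop (𝓝 0)) :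
    ∫ r in Ioi (0:ℝ), E θ₁ r = ∫ r in Ioi (0:ℝ), E θ₂ r := by
  set g : ℝ → ℂ := fun φ => ∫ r in Ioi (0:ℝ), E φ r with hg
  have hmeasE : ∀ φ ∈ Icc θ₁ θ₂, AEStronglyMeasurable (E φ) (volume.restrict (Ioi 0)) :=
    fun φ hφ => ((hEcontr φ hφ).aestronglyMeasurable measurableSet_Ioi)
  -- Step A : continuity of g on Icc
  have stepA : ContinuousOn g (Icc θ₁ θ₂) := by
    refine continuousOn_of_dominated hmeasE (fun φ hφ => ?_) hbE ?_
    · rw [ae_restrict_iff' measurableSet_Ioi]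
      filter_upwards with r hr
      exact hEbound φ hφ r hr
    · rw [ae_restrict_iff' measurableSet_Ioi]
      filter_upwards with r hr
      exact (hEcontφ r hr).continuousOn
  -- Step B : zero derivative of g on Ioo
  have stepB : ∀ φ ∈ Ioo θ₁ θ₂, HasDerivAt g 0 φ := by
    intro φ hφ
    have hε : 0 < min (φ - θ₁) (θ₂ - φ) := lt_min (by linarith [hφ.1]) (by linarith [hφ.2])
    have hball : Metric.ball φ (min (φ - θ₁) (θ₂ - φ)) ⊆ Ioo θ₁ θ₂ := by
      intro ψ hψ
      rw [Metric.mem_ball, Real.dist_eq, abs_lt] at hψ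
      constructor
      · have := hψ.1; have := min_le_left (φ - θ₁) (θ₂ - φ); linarith
      · have := hψ.2; have := min_le_right (φ - θ₁) (θ₂ - φ); linarith
    have key := hasDerivAt_integral_of_dominated_loc_of_deriv_le
      (μ := volume.restrict (Ioi (0:ℝ))) (x₀ := φ) (F := fun ψ r => E ψ r)
      (F' := fun ψ r => Q ψ r) (bound := bQ) (Metric.ball_mem_nhds φ hε) ?_ ?_ ?_ ?_ hbQ ?_
    · have hQ0 : ∫ r in Ioi (0:ℝ), Q φ r = 0 := by
        have h0 : ∫ r in Ioi (0:ℝ), Complex.I⁻¹ * Q φ r = 0 - P φ 0 := by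
          apply integral_Ioi_of_hasDerivAt_of_tendsto (hP0 φ hφ) (hderivr φ hφ) ?_ (hPtop φ hφ)
          apply Integrable.mono' hbQ
          · exact (((hQcontr φ hφ).aestronglyMeasurable measurableSet_Ioi).const_mul _)
          · rw [ae_restrict_iff' measurableSet_Ioi]
            filter_upwards with r hr
            rw [norm_mul]
            calc ‖Complex.I⁻¹‖ * ‖Q φ r‖ = ‖Q φ r‖ := by norm_num
              _ ≤ bQ r := hQbound φ (Ioo_subset_Icc_self hφ) r hr
        rw [hP00 φ hφ, sub_zero] at h0
        have : ∫ r in Ioi (0:ℝ), Q φ r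
            = ∫ r in Ioi (0:ℝ), Complex.I * (Complex.I⁻¹ * Q φ r) := by
          refine setIntegral_congr_fun measurableSet_Ioi (fun r _ => ?_)
          rw [← mul_assoc, mul_inv_cancel₀ Complex.I_ne_zero, one_mul]
        rw [this, integral_const_mul, h0, mul_zero]
      rw [← hQ0]
      exact key.2
    · filter_upwards [isOpen_Ioo.mem_nhds hφ] with ψ hψ
      exact hmeasE ψ (Ioo_subset_Icc_self hψ)
    · exact Integrable.mono' hbE (hmeasE φ (Ioo_subset_Icc_self hφ)) (by
        rw [ae_restrict_iff' measurableSet_Ioi]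
        filter_upwards with r hr
        exact hEbound φ (Ioo_subset_Icc_self hφ) r hr)
    · exact (hQcontr φ hφ).aestronglyMeasurable measurableSet_Ioi
    · rw [ae_restrict_iff' measurableSet_Ioi]
      filter_upwards with r hr
      intro ψ hψ
      exact hQbound ψ (Ioo_subset_Icc_self (hball hψ)) r hr
    · rw [ae_restrict_iff' measurableSet_Ioi]
      filter_upwards with r hr
      intro ψ hψ
      exact hderivφ r hr ψ (hball hψ)
  -- Step C : g is constant on Ioo
  set m : ℝ := (θ₁ + θ₂) / 2 with hm
  have hmIoo : m ∈ Ioo θ₁ θ₂ := ⟨by rw [hm]; linarith, by rw [hm]; linarith⟩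
  have key : ∀ φ ∈ Ioo θ₁ θ₂, g φ = g m := by
    intro φ hφ
    rcases le_total φ m with h | h
    · have := constant_of_has_deriv_right_zero (f := g) (a := φ) (b := m)
        (stepA.mono (Icc_subset_Icc hφ.1.le hmIoo.2.le))
        (fun x hx => (stepB x ⟨lt_of_lt_of_le hφ.1 hx.1, lt_trans hx.2 hmIoo.2⟩).hasDerivWithinAt)
      exact (this m ⟨h, le_rfl⟩).symm
    · have := constant_of_has_deriv_right_zero (f := g) (a := m) (b := φ)
        (stepA.mono (Icc_subset_Icc hmIoo.1.le hφ.2.le))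
        (fun x hx => (stepB x ⟨lt_of_lt_of_le hmIoo.1 hx.1, lt_trans hx.2 hφ.2⟩).hasDerivWithinAt)
      exact this φ ⟨h, le_rfl⟩
  have e1 : g θ₁ = g m := by
    have t1 : Tendsto g (𝓝[>] θ₁) (𝓝 (g θ₁)) := by
      apply (stepA θ₁ (left_mem_Icc.mpr hθ.le)).mono_of_mem_nhdsWithin
      exact mem_of_superset (Ioo_mem_nhdsGT_of_mem ⟨le_rfl, hθ⟩) Ioo_subset_Icc_self
    have t2 : Tendsto g (𝓝[>] θ₁) (𝓝 (g m)) := by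
      apply Tendsto.congr' _ (tendsto_const_nhds (x := g m))
      filter_upwards [Ioo_mem_nhdsGT_of_mem ⟨le_rfl, hθ⟩] with ψ hψ
      exact (key ψ hψ).symm
    exact tendsto_nhds_unique t1 t2
  have e2 : g θ₂ = g m := by
    have t1 : Tendsto g (𝓝[<] θ₂) (𝓝 (g θ₂)) := by
      apply (stepA θ₂ (right_mem_Icc.mpr hθ.le)).mono_of_mem_nhdsWithin
      exact mem_of_superset (Ioo_mem_nhdsLT_of_mem ⟨hθ, le_rfl⟩) Ioo_subset_Icc_self
    have t2 : Tendsto g (𝓝[<] θ₂) (𝓝 (g m)) := by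
      apply Tendsto.congr' _ (tendsto_const_nhds (x := g m))
      filter_upwards [Ioo_mem_nhdsLT_of_mem ⟨hθ, le_rfl⟩] with ψ hψ
      exact (key ψ hψ).symm
    exact tendsto_nhds_unique t1 t2
  rw [show (∫ r in Ioi (0:ℝ), E θ₁ r) = g θ₁ from rfl,
    show (∫ r in Ioi (0:ℝ), E θ₂ r) = g θ₂ from rfl, e1, e2]

lemma norm_cexp (w : ℂ) : ‖Complex.exp w‖ = Real.exp w.re := by
  rw [Complex.norm_exp]

lemma hasDerivAt_cexp_real_lin (c : ℂ) (x : ℝ) :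
    HasDerivAt (fun x : ℝ => Complex.exp (c * x)) (c * Complex.exp (c * x)) x := by
  have h : HasDerivAt (fun x : ℝ => c * (x:ℂ)) c x := by
    simpa using (Complex.ofRealCLM.hasDerivAt.const_mul c)
  simpa [mul_comm] using h.cexp

lemma re_ray (φ r : ℝ) : ((-Complex.exp (Complex.I * φ)) * r).re = -(Real.cos φ * r) := by
  rw [mul_comm Complex.I]
  simp [Complex.mul_re, Complex.exp_ofReal_mul_I_re, Complex.exp_ofReal_mul_I_im]

lemma re_lin_I (a φ : ℝ) : ((a : ℂ) * Complex.I * φ).re = 0 := by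
  simp [Complex.mul_re]

lemma intOn_rpow_exp_lin {q b : ℝ} (hq : -1 < q) (hb : 0 < b) :
    IntegrableOn (fun x : ℝ => x ^ q * Real.exp (-(b * x))) (Ioi 0) := by
  refine (intOn_rpow_exp one_pos hq hb).congr_fun (fun x _ => ?_) measurableSet_Ioi
  beta_reduce
  rw [Real.rpow_one]


lemma intOn_exp_rpow {p b : ℝ} (hp : 0 < p) (hb : 0 < b) :
    IntegrableOn (fun x : ℝ => Real.exp (-(b * x ^ p))) (Ioi 0) := by
  refine MeasureTheory.IntegrableOn.congr_fun (intOn_rpow_exp hp (q := 0) (by norm_num) hb)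
    (fun x hx => ?_) measurableSet_Ioi
  rw [Real.rpow_zero, one_mul]


lemma re_I_exp_mul (φ r : ℝ) :
    (Complex.I * Complex.exp (Complex.I * φ) * r).re = -(Real.sin φ * r) := by
  rw [mul_comm Complex.I (φ:ℂ)]
  simp [Complex.mul_re, Complex.mul_im, Complex.exp_ofReal_mul_I_re, Complex.exp_ofReal_mul_I_im]


/-- Gamma integral along a ray `e^{iβ}·(0,∞)` in the right half plane, `β ≤ 0`. -/
lemma gamma_ray {a : ℝ} (ha : 0 < a) {β : ℝ} (hβ1 : -(π/2) < β) (hβ2 : β ≤ 0) :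
    ∫ r in Ioi (0:ℝ), (((r ^ (a-1) : ℝ)) : ℂ) * Complex.exp ((-Complex.exp (Complex.I * β)) * r)
      = ((Real.Gamma a : ℝ) : ℂ) * Complex.exp (-((a:ℂ) * Complex.I * β)) := by
  -- the value at angle 0
  have hzero : ∫ r in Ioi (0:ℝ),
      (((r ^ (a-1) : ℝ)) : ℂ) * Complex.exp ((-Complex.exp (Complex.I * (0:ℝ))) * r)
      = ((Real.Gamma a : ℝ) : ℂ) := by
    calc ∫ r in Ioi (0:ℝ), (((r ^ (a-1) : ℝ)) : ℂ) *
            Complex.exp ((-Complex.exp (Complex.I * (0:ℝ))) * r)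
        = ∫ r in Ioi (0:ℝ), (((Real.exp (-r) * r ^ (a-1) : ℝ)) : ℂ) := by
          refine setIntegral_congr_fun measurableSet_Ioi (fun r _ => ?_)
          rw [Complex.ofReal_zero, mul_zero, Complex.exp_zero, neg_one_mul,
            Complex.ofReal_mul, ← Complex.ofReal_neg, ← Complex.ofReal_exp]
          ring
      _ = ((∫ r in Ioi (0:ℝ), Real.exp (-r) * r ^ (a-1) : ℝ) : ℂ) := integral_ofReal
      _ = ((Real.Gamma a : ℝ) : ℂ) := by rw [← Real.Gamma_eq_integral ha]
  rcases eq_or_lt_of_le hβ2 with rfl | hβ0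
  · rw [hzero]
    norm_num
  -- now β < 0 : apply the rotation lemma
  have hcβ : 0 < Real.cos β :=
    Real.cos_pos_of_mem_Ioo ⟨hβ1, lt_of_le_of_lt hβ2 Real.pi_div_two_pos⟩
  set c : ℝ := Real.cos β with hc
  -- data
  set E : ℝ → ℝ → ℂ := fun φ r => Complex.exp ((a:ℂ) * Complex.I * φ) *
      ((((r ^ (a-1) : ℝ)) : ℂ) * Complex.exp ((-Complex.exp (Complex.I * φ)) * r)) with hE
  set Q : ℝ → ℝ → ℂ := fun φ r => Complex.I *
      (((a:ℂ) - Complex.exp (Complex.I * φ) * r) * E φ r) with hQdef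
  set P : ℝ → ℝ → ℂ := fun φ r => (((r ^ a : ℝ)) : ℂ) *
      (Complex.exp ((a:ℂ) * Complex.I * φ) * Complex.exp ((-Complex.exp (Complex.I * φ)) * r))
      with hP
  -- cos φ ≥ c on [β, 0]
  have hcos : ∀ φ ∈ Icc β (0:ℝ), c ≤ Real.cos φ := by
    intro φ hφ
    have h1 : Real.cos (-β) ≤ Real.cos (-φ) := by
      apply Real.cos_le_cos_of_nonneg_of_le_pi (neg_nonneg.mpr hφ.2)
      · have := Real.pi_div_two_pos
        have h2 : -β < π / 2 := by linarith
        linarith [Real.pi_pos]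
      · exact neg_le_neg hφ.1
    rwa [Real.cos_neg, Real.cos_neg] at h1
  have hcospos : ∀ φ ∈ Icc β (0:ℝ), 0 < Real.cos φ := fun φ hφ => lt_of_lt_of_le hcβ (hcos φ hφ)
  -- norm of E
  have hnE : ∀ (φ : ℝ) (r : ℝ), 0 ≤ r → ‖E φ r‖ = r ^ (a-1) * Real.exp (-(Real.cos φ * r)) := by
    intro φ r hr
    rw [hE]
    simp only
    rw [norm_mul, norm_mul, norm_cexp, norm_cexp, re_lin_I, re_ray, Complex.norm_real,
      Real.norm_of_nonneg (Real.rpow_nonneg hr _), Real.exp_zero, one_mul]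
  -- bounds
  have hEb : ∀ φ ∈ Icc β (0:ℝ), ∀ r ∈ Ioi (0:ℝ),
      ‖E φ r‖ ≤ r ^ (a-1) * Real.exp (-(c * r)) := by
    intro φ hφ r hr
    rw [hnE φ r (le_of_lt hr)]
    apply mul_le_mul_of_nonneg_left _ (Real.rpow_nonneg hr.le _)
    apply Real.exp_le_exp.mpr
    have := hcos φ hφ
    have := mem_Ioi.mp hr
    nlinarith
  have hQb : ∀ φ ∈ Icc β (0:ℝ), ∀ r ∈ Ioi (0:ℝ),
      ‖Q φ r‖ ≤ (a + r) * (r ^ (a-1) * Real.exp (-(c * r))) := by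
    intro φ hφ r hr
    rw [hQdef]
    simp only
    rw [norm_mul, norm_mul, Complex.norm_I, one_mul]
    apply mul_le_mul _ (hEb φ hφ r hr) (norm_nonneg _) (add_nonneg ha.le (le_of_lt (mem_Ioi.mp hr)))
    calc ‖(a:ℂ) - Complex.exp (Complex.I * φ) * r‖
        ≤ ‖(a:ℂ)‖ + ‖Complex.exp (Complex.I * φ) * r‖ := norm_sub_le _ _
      _ = a + r := by
          rw [norm_mul, norm_cexp]
          have h1 : (Complex.I * (φ:ℂ)).re = 0 := by simp [Complex.mul_re]
          rw [h1, Real.exp_zero, one_mul, Complex.norm_real, Complex.norm_real,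
            Real.norm_of_nonneg ha.le, Real.norm_of_nonneg (mem_Ioi.mp hr).le]
  -- rotation
  have hrot := rotation_of_deriv_zero hβ0 E Q P
    (fun r => r ^ (a-1) * Real.exp (-(c * r)))
    (fun r => (a + r) * (r ^ (a-1) * Real.exp (-(c * r))))
    (intOn_rpow_exp_lin (by linarith) hcβ)
    ?_ ?_ ?_ hEb hQb ?_ ?_ ?_ ?_ ?_ ?_
  · -- conclude
    have h00 : (∫ r in Ioi (0:ℝ), E 0 r) = ((Real.Gamma a : ℝ) : ℂ) := by
      rw [← hzero, hE]
      refine setIntegral_congr_fun measurableSet_Ioi (fun r _ => ?_)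
      simp
    rw [h00] at hrot
    have hfold : ∫ r in Ioi (0:ℝ), E β r = Complex.exp ((a:ℂ) * Complex.I * β) *
        ∫ r in Ioi (0:ℝ),
          (((r ^ (a-1) : ℝ)) : ℂ) * Complex.exp ((-Complex.exp (Complex.I * β)) * r) := by
      rw [hE]
      simp only
      rw [integral_const_mul]
    rw [hfold] at hrot
    apply mul_left_cancel₀ (Complex.exp_ne_zero ((a:ℂ) * Complex.I * β))
    rw [hrot, Complex.exp_neg]
    field_simp
  · -- integrability of bQ
    have h1 : IntegrableOn (fun r : ℝ => a * (r ^ (a-1) * Real.exp (-(c * r)))) (Ioi 0) :=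
      (intOn_rpow_exp_lin (by linarith) hcβ).const_mul a
    have h2 : IntegrableOn (fun r : ℝ => r ^ a * Real.exp (-(c * r))) (Ioi 0) :=
      intOn_rpow_exp_lin (by linarith) hcβ
    refine MeasureTheory.IntegrableOn.congr_fun (h1.add h2) (fun r hr => ?_) measurableSet_Ioi
    simp only [Pi.add_apply]
    rw [mem_Ioi] at hr
    have : r ^ a = r ^ (a-1) * r := by
      nth_rewrite 1 [show a = a - 1 + 1 by ring]
      exact Real.rpow_add_one hr.ne' _
    rw [this]; ring
  · -- hEcontr
    intro φ _
    apply ContinuousOn.mul continuousOn_const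
    apply ContinuousOn.mul
    · intro r hr
      exact (Complex.continuous_ofReal.continuousAt.comp
        (Real.continuousAt_rpow_const r (a-1) (Or.inl (ne_of_gt hr)))).continuousWithinAt
    · exact (Complex.continuous_exp.comp
        (continuous_const.mul Complex.continuous_ofReal)).continuousOn
  · -- hQcontr
    intro φ _
    apply ContinuousOn.mul continuousOn_const
    apply ContinuousOn.mul
    · exact (continuous_const.sub
        (continuous_const.mul Complex.continuous_ofReal)).continuousOn
    · -- ContinuousOn E φ
      apply ContinuousOn.mul continuousOn_const
      apply ContinuousOn.mul
      · intro r hr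
        exact (Complex.continuous_ofReal.continuousAt.comp
          (Real.continuousAt_rpow_const r (a-1) (Or.inl (ne_of_gt hr)))).continuousWithinAt
      · exact (Complex.continuous_exp.comp
          (continuous_const.mul Complex.continuous_ofReal)).continuousOn
  · -- hEcontφ
    intro r _
    apply Continuous.mul
    · exact Complex.continuous_exp.comp (continuous_const.mul Complex.continuous_ofReal)
    apply Continuous.mul continuous_const
    apply Complex.continuous_exp.comp
    apply Continuous.mul _ continuous_const
    exact (Complex.continuous_exp.comp (continuous_const.mul Complex.continuous_ofReal)).neg
  · -- hderivφ
    intro r hr φ _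
    have h1 := hasDerivAt_cexp_real_lin ((a:ℂ) * Complex.I) φ
    have h2 := hasDerivAt_cexp_real_lin Complex.I φ
    have h3 := (h2.neg.mul_const (r:ℂ)).cexp
    have h4 := h3.const_mul (((r ^ (a-1) : ℝ)) : ℂ)
    have h5 := h1.mul h4
    refine h5.congr_deriv (Eq.symm ?_)
    rw [hQdef, hE]
    simp only [Pi.neg_apply]
    ring
  · -- hderivr
    intro φ _ r hr
    rw [mem_Ioi] at hr
    have hu : HasDerivAt (fun r : ℝ => (((r ^ a : ℝ)) : ℂ)) ((a * r ^ (a-1) : ℝ) : ℂ) r :=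
      (Real.hasDerivAt_rpow_const (Or.inl hr.ne')).ofReal_comp
    have hv := hasDerivAt_cexp_real_lin (-Complex.exp (Complex.I * φ)) r
    have hv' := hv.const_mul (Complex.exp ((a:ℂ) * Complex.I * φ))
    have h := hu.mul hv'
    refine h.congr_deriv (Eq.symm ?_)
    rw [hQdef, hE]
    simp only
    rw [← mul_assoc, inv_mul_cancel₀ Complex.I_ne_zero, one_mul]
    have hra : (r:ℝ) ^ a = r ^ (a-1) * r := by
      nth_rewrite 1 [show a = a - 1 + 1 by ring]
      exact Real.rpow_add_one hr.ne' _
    rw [hra]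
    push_cast
    ring
  · -- hP0
    intro φ _
    rw [hP]
    simp only
    apply ContinuousWithinAt.mul
    · exact (Complex.continuous_ofReal.continuousAt.comp
        (Real.continuousAt_rpow_const 0 a (Or.inr ha.le))).continuousWithinAt
    · exact (Continuous.continuousWithinAt (by
        exact continuous_const.mul (Complex.continuous_exp.comp
          (continuous_const.mul Complex.continuous_ofReal))))
  · -- hP00
    intro φ _
    rw [hP]
    simp only
    rw [Real.zero_rpow ha.ne']
    simp
  · -- hPtop
    intro φ hφ
    have hcφ : 0 < Real.cos φ := hcospos φ (Ioo_subset_Icc_self hφ)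
    rw [tendsto_zero_iff_norm_tendsto_zero]
    apply Tendsto.congr' _ (tendsto_rpow_mul_exp_neg_mul_atTop_nhds_zero a (Real.cos φ) hcφ)
    filter_upwards [eventually_gt_atTop (0:ℝ)] with r hr
    rw [hP]
    simp only
    rw [norm_mul, norm_mul, norm_cexp, norm_cexp, re_lin_I, re_ray, Complex.norm_real,
      Real.norm_of_nonneg (Real.rpow_nonneg hr.le _), Real.exp_zero, one_mul, neg_mul]

/-- Rotation of `∫_0^∞ exp(i r - ε r^α) dr` to the ray of angle `θ`. -/
lemma rotate_main {α ε θ : ℝ} (hα : 0 < α) (hε : 0 < ε) (hθ : 0 < θ) (hθ2 : θ ≤ π/2)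
    (hαθ : α * θ < π/2) :
    ∫ r in Ioi (0:ℝ), Complex.exp (Complex.I * r - (ε:ℂ) * ((r^α : ℝ) : ℂ)) =
      Complex.exp (Complex.I * θ) * ∫ r in Ioi (0:ℝ),
        Complex.exp (Complex.I * Complex.exp (Complex.I * θ) * r
          - (ε:ℂ) * ((r^α : ℝ) : ℂ) * Complex.exp (Complex.I * α * θ)) := by
  set c : ℝ := Real.cos (α * θ) with hc
  have hcpos : 0 < c := Real.cos_pos_of_mem_Ioo
    ⟨by nlinarith [Real.pi_pos], hαθ⟩
  set w : ℝ → ℝ → ℂ := fun φ r => Complex.I * Complex.exp (Complex.I * φ) * r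
      - (ε:ℂ) * ((r^α : ℝ) : ℂ) * Complex.exp (Complex.I * α * φ) with hw
  set E : ℝ → ℝ → ℂ := fun φ r => Complex.exp (Complex.I * φ) * Complex.exp (w φ r) with hE
  set Q : ℝ → ℝ → ℂ := fun φ r => Complex.I *
    ((1 + Complex.I * Complex.exp (Complex.I * φ) * r
      - (α:ℂ) * ε * ((r^α : ℝ) : ℂ) * Complex.exp (Complex.I * α * φ)) * E φ r) with hQdef
  set P : ℝ → ℝ → ℂ := fun φ r => (r : ℂ) * E φ r with hP
  -- real part of w
  have hwre : ∀ φ r : ℝ, (w φ r).re = -(Real.sin φ * r) - ε * r^α * Real.cos (α * φ) := by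
    intro φ r
    rw [hw]
    simp only [Complex.sub_re]
    rw [re_I_exp_mul]
    congr 1
    have h1 : (ε:ℂ) * ((r^α : ℝ) : ℂ) * Complex.exp (Complex.I * α * φ)
        = ((ε * r^α : ℝ) : ℂ) * Complex.exp (((α * φ : ℝ) : ℂ) * Complex.I) := by
      push_cast; ring
    rw [h1, Complex.re_ofReal_mul, Complex.exp_ofReal_mul_I_re]
  -- cos bound on the interval
  have hcos : ∀ φ ∈ Icc 0 θ, c ≤ Real.cos (α * φ) := by
    intro φ hφ
    apply Real.cos_le_cos_of_nonneg_of_le_pi (mul_nonneg hα.le hφ.1)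
    · nlinarith [Real.pi_pos]
    · exact mul_le_mul_of_nonneg_left hφ.2 hα.le
  have hsin : ∀ φ ∈ Icc 0 θ, 0 ≤ Real.sin φ := by
    intro φ hφ
    apply Real.sin_nonneg_of_nonneg_of_le_pi hφ.1
    nlinarith [Real.pi_pos, hφ.2]
  -- norm of E
  have hnE : ∀ φ r : ℝ, ‖E φ r‖
      = Real.exp (-(Real.sin φ * r) - ε * r^α * Real.cos (α * φ)) := by
    intro φ r
    rw [hE]
    simp only
    rw [norm_mul, norm_cexp, norm_cexp, hwre]
    have : (Complex.I * (φ:ℂ)).re = 0 := by simp [Complex.mul_re]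
    rw [this, Real.exp_zero, one_mul]
  have hEb : ∀ φ ∈ Icc 0 θ, ∀ r ∈ Ioi (0:ℝ),
      ‖E φ r‖ ≤ Real.exp (-(ε * c * r^α)) := by
    intro φ hφ r hr
    rw [hnE]
    apply Real.exp_le_exp.mpr
    have h1 := hcos φ hφ
    have h2 := hsin φ hφ
    have h3 : (0:ℝ) < r := hr
    have h4 : (0:ℝ) ≤ r ^ α := Real.rpow_nonneg h3.le α
    nlinarith [mul_le_mul_of_nonneg_left h1 (mul_nonneg hε.le h4), mul_nonneg h2 h3.le]
  have hQb : ∀ φ ∈ Icc 0 θ, ∀ r ∈ Ioi (0:ℝ),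
      ‖Q φ r‖ ≤ (1 + r + α * ε * r^α) * Real.exp (-(ε * c * r^α)) := by
    intro φ hφ r hr
    have h3 : (0:ℝ) < r := hr
    rw [hQdef]
    simp only
    rw [norm_mul, Complex.norm_I, one_mul, norm_mul]
    apply mul_le_mul _ (hEb φ hφ r hr) (norm_nonneg _)
      (by positivity)
    calc ‖1 + Complex.I * Complex.exp (Complex.I * φ) * r
          - (α:ℂ) * ε * ((r^α : ℝ) : ℂ) * Complex.exp (Complex.I * α * φ)‖
        ≤ ‖1 + Complex.I * Complex.exp (Complex.I * φ) * r‖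
          + ‖(α:ℂ) * ε * ((r^α : ℝ) : ℂ) * Complex.exp (Complex.I * α * φ)‖ := norm_sub_le _ _
      _ ≤ (‖(1:ℂ)‖ + ‖Complex.I * Complex.exp (Complex.I * φ) * r‖)
          + ‖(α:ℂ) * ε * ((r^α : ℝ) : ℂ) * Complex.exp (Complex.I * α * φ)‖ := by
            exact add_le_add (norm_add_le _ _) le_rfl
      _ = 1 + r + α * ε * r^α := by
          rw [norm_one]
          have e1 : ‖Complex.I * Complex.exp (Complex.I * φ) * (r:ℂ)‖ = r := by
            rw [norm_mul, norm_mul, Complex.norm_I, one_mul, norm_cexp]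
            have : (Complex.I * (φ:ℂ)).re = 0 := by simp [Complex.mul_re]
            rw [this, Real.exp_zero, one_mul, Complex.norm_real, Real.norm_of_nonneg h3.le]
          have e2 : ‖(α:ℂ) * ε * ((r^α : ℝ) : ℂ) * Complex.exp (Complex.I * α * φ)‖
              = α * ε * r^α := by
            rw [norm_mul, norm_mul, norm_mul, norm_cexp]
            have : (Complex.I * (α:ℂ) * (φ:ℂ)).re = 0 := by simp [Complex.mul_re, Complex.mul_im]
            rw [this, Real.exp_zero, mul_one, Complex.norm_real, Complex.norm_real,
              Complex.norm_real, Real.norm_of_nonneg hα.le, Real.norm_of_nonneg hε.le,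
              Real.norm_of_nonneg (Real.rpow_nonneg h3.le α)]
          rw [e1, e2]
  have hrot := rotation_of_deriv_zero hθ E Q P
    (fun r => Real.exp (-(ε * c * r^α)))
    (fun r => (1 + r + α * ε * r^α) * Real.exp (-(ε * c * r^α)))
    (intOn_exp_rpow hα (by positivity))
    ?_ ?_ ?_ hEb hQb ?_ ?_ ?_ ?_ ?_ ?_
  · -- conclusion from hrot
    have h1 : ∫ r in Ioi (0:ℝ), E 0 r
        = ∫ r in Ioi (0:ℝ), Complex.exp (Complex.I * r - (ε:ℂ) * ((r^α : ℝ) : ℂ)) := by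
      rw [hE]
      refine setIntegral_congr_fun measurableSet_Ioi (fun r _ => ?_)
      rw [hw]
      simp
    have h2 : ∫ r in Ioi (0:ℝ), E θ r = Complex.exp (Complex.I * θ) * ∫ r in Ioi (0:ℝ),
        Complex.exp (Complex.I * Complex.exp (Complex.I * θ) * r
          - (ε:ℂ) * ((r^α : ℝ) : ℂ) * Complex.exp (Complex.I * α * θ)) := by
      rw [hE, hw]
      simp only
      rw [integral_const_mul]
    rw [← h1, ← h2]
    exact hrot
  · -- integrability of bQ
    have i0 : IntegrableOn (fun r : ℝ => Real.exp (-(ε * c * r^α))) (Ioi 0) :=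
      intOn_exp_rpow hα (by positivity)
    have i1 : IntegrableOn (fun r : ℝ => r ^ (1:ℝ) * Real.exp (-(ε * c * r^α))) (Ioi 0) :=
      intOn_rpow_exp hα (by norm_num) (by positivity)
    have i2 : IntegrableOn (fun r : ℝ => (α * ε) * (r ^ α * Real.exp (-(ε * c * r^α))))
        (Ioi 0) := (intOn_rpow_exp hα (by linarith) (by positivity)).const_mul _
    refine MeasureTheory.IntegrableOn.congr_fun ((i0.add i1).add i2)
      (fun r hr => ?_) measurableSet_Ioi
    simp only [Pi.add_apply]
    rw [Real.rpow_one]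
    ring
  · -- hEcontr
    intro φ _
    rw [hE, hw]
    simp only
    apply ContinuousOn.mul continuousOn_const
    apply Complex.continuous_exp.comp_continuousOn
    apply ContinuousOn.sub
    · exact (continuous_const.mul Complex.continuous_ofReal).continuousOn
    · apply ContinuousOn.mul _ continuousOn_const
      apply ContinuousOn.mul continuousOn_const
      intro r hr
      exact (Complex.continuous_ofReal.continuousAt.comp
        (Real.continuousAt_rpow_const r α (Or.inl (ne_of_gt hr)))).continuousWithinAt
  · -- hQcontr
    intro φ _
    rw [hQdef, hE, hw]
    simp only
    apply ContinuousOn.mul continuousOn_const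
    apply ContinuousOn.mul
    · apply ContinuousOn.sub
      · apply ContinuousOn.add continuousOn_const
        exact (continuous_const.mul Complex.continuous_ofReal).continuousOn
      · apply ContinuousOn.mul _ continuousOn_const
        apply ContinuousOn.mul continuousOn_const
        intro r hr
        exact (Complex.continuous_ofReal.continuousAt.comp
          (Real.continuousAt_rpow_const r α (Or.inl (ne_of_gt hr)))).continuousWithinAt
    · apply ContinuousOn.mul continuousOn_const
      apply Complex.continuous_exp.comp_continuousOn
      apply ContinuousOn.sub
      · exact (continuous_const.mul Complex.continuous_ofReal).continuousOn
      · apply ContinuousOn.mul _ continuousOn_const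
        apply ContinuousOn.mul continuousOn_const
        intro r hr
        exact (Complex.continuous_ofReal.continuousAt.comp
          (Real.continuousAt_rpow_const r α (Or.inl (ne_of_gt hr)))).continuousWithinAt
  · -- hEcontφ
    intro r _
    rw [hE, hw]
    simp only
    have cφ : Continuous fun φ : ℝ => (φ:ℂ) := Complex.continuous_ofReal
    apply Continuous.mul
    · exact Complex.continuous_exp.comp (continuous_const.mul cφ)
    apply Complex.continuous_exp.comp
    apply Continuous.sub
    · exact (continuous_const.mul
        (Complex.continuous_exp.comp (continuous_const.mul cφ))).mul continuous_const
    · apply Continuous.mul continuous_const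
      apply Complex.continuous_exp.comp
      exact continuous_const.mul cφ
  · -- hderivφ
    intro r hr φ _
    have h1 := hasDerivAt_cexp_real_lin Complex.I φ
    have h2 : HasDerivAt (fun ψ : ℝ => Complex.I * Complex.exp (Complex.I * ψ) * (r:ℂ))
        (Complex.I * (Complex.I * Complex.exp (Complex.I * φ)) * (r:ℂ)) φ :=
      (h1.const_mul Complex.I).mul_const _
    have h3 : HasDerivAt (fun ψ : ℝ => Complex.exp (Complex.I * (α:ℂ) * ψ))
        (Complex.I * (α:ℂ) * Complex.exp (Complex.I * (α:ℂ) * φ)) φ :=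
      hasDerivAt_cexp_real_lin _ φ
    have h4 : HasDerivAt (fun ψ : ℝ => (ε:ℂ) * ((r^α : ℝ) : ℂ) * Complex.exp (Complex.I * α * ψ))
        ((ε:ℂ) * ((r^α : ℝ) : ℂ) * (Complex.I * (α:ℂ) * Complex.exp (Complex.I * (α:ℂ) * φ))) φ :=
      h3.const_mul _
    have h5 : HasDerivAt (fun ψ : ℝ => w ψ r)
        (Complex.I * (Complex.I * Complex.exp (Complex.I * φ)) * (r:ℂ)
          - (ε:ℂ) * ((r^α : ℝ) : ℂ) * (Complex.I * (α:ℂ) * Complex.exp (Complex.I * (α:ℂ) * φ)))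
        φ := by
      rw [hw]
      exact h2.sub h4
    have h6 := h5.cexp
    have h7 := h1.mul h6
    refine h7.congr_deriv (Eq.symm ?_)
    rw [hQdef, hE]
    simp only
    ring
  · -- hderivr
    intro φ _ r hr
    rw [mem_Ioi] at hr
    have hu : HasDerivAt (fun r : ℝ => Complex.I * Complex.exp (Complex.I * φ) * (r:ℂ))
        (Complex.I * Complex.exp (Complex.I * φ)) r := by
      simpa using (Complex.ofRealCLM.hasDerivAt.const_mul (Complex.I * Complex.exp (Complex.I * φ)))
    have hv : HasDerivAt (fun r : ℝ => ((r^α : ℝ) : ℂ)) ((α * r ^ (α-1) : ℝ) : ℂ) r :=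
      (Real.hasDerivAt_rpow_const (Or.inl hr.ne')).ofReal_comp
    have hv' : HasDerivAt (fun r : ℝ => (ε:ℂ) * ((r^α : ℝ) : ℂ) * Complex.exp (Complex.I * α * φ))
        ((ε:ℂ) * ((α * r ^ (α-1) : ℝ) : ℂ) * Complex.exp (Complex.I * α * φ)) r := by
      have := (hv.const_mul (ε:ℂ)).mul_const (Complex.exp (Complex.I * α * φ))
      convert this using 1
    have hw' : HasDerivAt (fun ρ : ℝ => w φ ρ)
        (Complex.I * Complex.exp (Complex.I * φ)
          - (ε:ℂ) * ((α * r ^ (α-1) : ℝ) : ℂ) * Complex.exp (Complex.I * α * φ)) r := by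
      rw [hw]
      exact hu.sub hv'
    have h6 := hw'.cexp
    have h7 : HasDerivAt (fun ρ : ℝ => (ρ:ℂ)) 1 r := by
      exact Complex.ofRealCLM.hasDerivAt
    have h8 := (h7.mul (h6.const_mul (Complex.exp (Complex.I * φ))))
    have h9 : HasDerivAt (P φ)
        (1 * (Complex.exp (Complex.I * φ) * Complex.exp (w φ r)) + (r:ℂ) *
          (Complex.exp (Complex.I * φ) * (Complex.exp (w φ r) *
            (Complex.I * Complex.exp (Complex.I * φ)
            - (ε:ℂ) * ((α * r ^ (α-1) : ℝ) : ℂ) * Complex.exp (Complex.I * α * φ))))) r := by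
      rw [hP, hE]
      simp only
      exact h8
    convert h9 using 1
    rw [hQdef, hE]
    simp only
    rw [← mul_assoc, inv_mul_cancel₀ Complex.I_ne_zero, one_mul]
    have hra : (r:ℝ) ^ α = r ^ (α-1) * r := by
      nth_rewrite 1 [show α = α - 1 + 1 by ring]
      exact Real.rpow_add_one hr.ne' _
    rw [hra]
    push_cast
    ring
  · -- hP0
    intro φ _
    rw [hP, hE, hw]
    simp only
    apply ContinuousWithinAt.mul
    · exact Complex.continuous_ofReal.continuousAt.continuousWithinAt
    apply ContinuousWithinAt.mul
    · exact continuousAt_const.continuousWithinAt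
    apply ContinuousAt.continuousWithinAt
    apply Complex.continuous_exp.continuousAt.comp
    apply ContinuousAt.sub
    · exact (continuous_const.mul Complex.continuous_ofReal).continuousAt
    apply ContinuousAt.mul _ continuousAt_const
    apply ContinuousAt.mul continuousAt_const
    exact Complex.continuous_ofReal.continuousAt.comp
      (Real.continuousAt_rpow_const 0 α (Or.inr hα.le))
  · -- hP00
    intro φ _
    rw [hP]
    simp
  · -- hPtop
    intro φ hφ
    have hcφ : 0 < Real.cos (α * φ) :=
      lt_of_lt_of_le hcpos (hcos φ (Ioo_subset_Icc_self hφ))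
    rw [tendsto_zero_iff_norm_tendsto_zero]
    apply squeeze_zero_norm' _
      (tendsto_rpow_mul_exp_neg_mul_rpow_atTop 1 (b := ε * Real.cos (α * φ)) (by positivity) hα)
    filter_upwards [eventually_gt_atTop (0:ℝ)] with r hr
    rw [norm_norm, hP]
    simp only
    rw [norm_mul, Complex.norm_real, Real.norm_of_nonneg hr.le, hnE, Real.rpow_one]
    apply mul_le_mul_of_nonneg_left _ hr.le
    apply Real.exp_le_exp.mpr
    have h2 : 0 ≤ Real.sin φ := hsin φ (Ioo_subset_Icc_self hφ)
    nlinarith [Real.rpow_nonneg hr.le α, mul_nonneg h2 hr.le]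

lemma main_limit {α : ℝ} (hα : 0 < α) :
    Tendsto (fun ε : ℝ => ε⁻¹ * ∫ u in Ioi (0:ℝ), Real.cos u * Real.exp (-(ε * u^α)))
      (𝓝[>] 0) (𝓝 (Real.Gamma (α+1) * Real.sin (π * α / 2))) := by
  have hπ := Real.pi_pos
  set θ : ℝ := π / (2 * (α + 1)) with hθdef
  have hθpos : 0 < θ := by positivity
  have hθ2 : θ ≤ π / 2 := by
    rw [hθdef, div_le_div_iff₀ (by positivity) (by norm_num)]
    nlinarith
  have hαθ : α * θ < π / 2 := by
    rw [hθdef]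
    rw [show α * (π / (2 * (α + 1))) = π * (α / (2 * (α + 1))) by ring]
    have : α / (2 * (α + 1)) < 1 / 2 := by
      rw [div_lt_div_iff₀ (by positivity) (by norm_num)]
      nlinarith
    calc π * (α / (2 * (α + 1))) < π * (1/2) := by
          exact mul_lt_mul_of_pos_left this hπ
      _ = π / 2 := by ring
  set β : ℝ := θ - π / 2 with hβdef
  have hβ1 : -(π/2) < β := by rw [hβdef]; linarith
  have hβ2 : β ≤ 0 := by rw [hβdef]; linarith
  have hcβ : 0 < Real.cos β := Real.cos_pos_of_mem_Ioo ⟨hβ1, by rw [hβdef]; linarith⟩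
  set s : ℂ := Complex.exp (Complex.I * β) with hs
  have hsre : s.re = Real.cos β := by
    rw [hs, mul_comm Complex.I (β:ℂ), Complex.exp_ofReal_mul_I_re]
  -- the exp(I θ) / s = I identity
  have hIcomb : Complex.I * Complex.exp (Complex.I * θ) = -s := by
    rw [hs]
    have h1 : Complex.exp (Complex.I * β) = Complex.exp (Complex.I * θ) *
        Complex.exp (((-(π/2) : ℝ) : ℂ) * Complex.I) := by
      rw [← Complex.exp_add]
      congr 1
      rw [hβdef]
      push_cast
      ring
    have h2 : Complex.exp (((-(π/2) : ℝ) : ℂ) * Complex.I) = -Complex.I := by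
      rw [Complex.exp_mul_I]
      rw [← Complex.ofReal_cos, ← Complex.ofReal_sin]
      rw [Real.cos_neg, Real.sin_neg, Real.cos_pi_div_two, Real.sin_pi_div_two]
      simp
    rw [h1, h2]
    ring
  -- the limit value of G
  set W : ℝ → ℂ := fun r => ((r^α : ℝ) : ℂ) * Complex.exp (Complex.I * α * θ) with hW
  set Glim : ℂ := ∫ r in Ioi (0:ℝ), Complex.exp ((-s) * r) * (-W r) with hGlim
  -- re of s-exponent
  have hBre : ∀ (ε r : ℝ), 0 ≤ r → 0 ≤ ε →
      ((ε:ℂ) * ((r^α : ℝ) : ℂ) * Complex.exp (Complex.I * α * θ)).re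
        = ε * r^α * Real.cos (α * θ) := by
    intro ε r hr hε
    have h1 : (ε:ℂ) * ((r^α : ℝ) : ℂ) * Complex.exp (Complex.I * α * θ)
        = ((ε * r^α : ℝ) : ℂ) * Complex.exp (((α * θ : ℝ) : ℂ) * Complex.I) := by
      push_cast; ring
    rw [h1, Complex.re_ofReal_mul, Complex.exp_ofReal_mul_I_re]
  have hcαθ : 0 < Real.cos (α * θ) := by
    apply Real.cos_pos_of_mem_Ioo
    constructor
    · have : 0 ≤ α * θ := by positivity
      linarith
    · exact hαθ
  -- norm of W
  have hnW : ∀ r : ℝ, 0 ≤ r → ‖W r‖ = r ^ α := by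
    intro r hr
    rw [hW]
    simp only
    rw [norm_mul, norm_cexp, Complex.norm_real, Real.norm_of_nonneg (Real.rpow_nonneg hr α)]
    have : (Complex.I * (α:ℂ) * (θ:ℂ)).re = 0 := by simp [Complex.mul_re, Complex.mul_im]
    rw [this, Real.exp_zero, mul_one]
  -- the G family and its convergence
  set G : ℝ → ℂ := fun ε => ∫ r in Ioi (0:ℝ),
      Complex.exp ((-s) * r) * ((ε:ℂ)⁻¹ * (Complex.exp (-((ε:ℂ) * ((r^α : ℝ) : ℂ) *
        Complex.exp (Complex.I * α * θ))) - 1)) with hG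
  have hGtendsto : Tendsto G (𝓝[>] 0) (𝓝 Glim) := by
    rw [hG, hGlim]
    apply tendsto_integral_filter_of_dominated_convergence
      (bound := fun r => r ^ α * Real.exp (-(Real.cos β * r)))
    · -- measurability
      filter_upwards [self_mem_nhdsWithin] with ε hε
      apply ContinuousOn.aestronglyMeasurable _ measurableSet_Ioi
      apply ContinuousOn.mul
      · exact (Complex.continuous_exp.comp
          (continuous_const.mul Complex.continuous_ofReal)).continuousOn
      apply ContinuousOn.mul continuousOn_const
      apply ContinuousOn.sub _ continuousOn_const
      apply Complex.continuous_exp.comp_continuousOn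
      apply ContinuousOn.neg
      apply ContinuousOn.mul _ continuousOn_const
      apply ContinuousOn.mul continuousOn_const
      intro r hr
      exact (Complex.continuous_ofReal.continuousAt.comp
        (Real.continuousAt_rpow_const r α (Or.inl (ne_of_gt hr)))).continuousWithinAt
    · -- bound
      filter_upwards [self_mem_nhdsWithin] with ε hε
      rw [ae_restrict_iff' measurableSet_Ioi]
      filter_upwards with r hr
      rw [mem_Ioi] at hr
      rw [mem_Ioi] at hε
      rw [norm_mul]
      have e1 : ‖Complex.exp ((-s) * r)‖ = Real.exp (-(Real.cos β * r)) := by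
        rw [norm_cexp, hs, re_ray]
      rw [e1, norm_mul]
      rw [mul_comm (r ^ α) (Real.exp (-(Real.cos β * r)))]
      apply mul_le_mul_of_nonneg_left _ (Real.exp_nonneg _)
      have e2 : ‖Complex.exp (-((ε:ℂ) * ((r^α : ℝ) : ℂ) * Complex.exp (Complex.I * α * θ)))
          - 1‖ ≤ ε * r ^ α := by
        have h1 := norm_exp_neg_sub_one_le (w := (ε:ℂ) * ((r^α : ℝ) : ℂ) *
          Complex.exp (Complex.I * α * θ)) (by
            rw [hBre ε r hr.le hε.le]
            positivity)
        calc ‖_ - 1‖ ≤ _ := h1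
          _ = ε * r ^ α := by
              rw [show (ε:ℂ) * ((r^α : ℝ) : ℂ) * Complex.exp (Complex.I * α * θ)
                  = (ε:ℂ) * W r by rw [hW]; ring]
              rw [norm_mul, Complex.norm_real, Real.norm_of_nonneg hε.le, hnW r hr.le]
      calc ‖(ε:ℂ)⁻¹‖ * ‖_ - 1‖ ≤ ‖(ε:ℂ)⁻¹‖ * (ε * r ^ α) :=
            mul_le_mul_of_nonneg_left e2 (norm_nonneg _)
        _ = r ^ α := by
            rw [norm_inv, Complex.norm_real, Real.norm_of_nonneg hε.le]
            field_simp
    · -- bound integrable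
      refine MeasureTheory.IntegrableOn.congr_fun (intOn_rpow_exp_lin (by linarith) hcβ)
        (fun r _ => rfl) measurableSet_Ioi
    · -- pointwise convergence
      rw [ae_restrict_iff' measurableSet_Ioi]
      filter_upwards with r hr
      rw [mem_Ioi] at hr
      apply Tendsto.const_mul
      -- ε⁻¹ (exp(-εW) - 1) → -W
      have hd := hasDerivAt_cexp_real_lin (-W r) 0
      rw [hasDerivAt_iff_tendsto_slope] at hd
      rw [Complex.ofReal_zero, mul_zero, Complex.exp_zero, mul_one] at hd
      have hmono : 𝓝[>] (0:ℝ) ≤ 𝓝[≠] (0:ℝ) :=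
        nhdsWithin_mono 0 (fun x hx => ne_of_gt hx)
      have hd2 := hd.mono_left hmono
      apply Tendsto.congr' _ hd2
      filter_upwards [self_mem_nhdsWithin] with ε hε
      have hAB : -W r * (ε:ℂ) = -((ε:ℂ) * ((r^α : ℝ) : ℂ) *
          Complex.exp (Complex.I * ↑α * ↑θ)) := by rw [hW]; ring
      rw [slope_def_module, sub_zero, Complex.ofReal_zero, mul_zero, Complex.exp_zero, hAB,
        Complex.real_smul, Complex.ofReal_inv]
  -- value of Glim
  have hGlim_eq : Glim = -Complex.exp (Complex.I * ↑α * ↑θ) *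
      (((Real.Gamma (α+1) : ℝ) : ℂ) * Complex.exp (-(((α+1 : ℝ):ℂ) * Complex.I * ↑β))) := by
    rw [hGlim]
    rw [setIntegral_congr_fun measurableSet_Ioi (g := fun r : ℝ =>
      (-Complex.exp (Complex.I * ↑α * ↑θ)) * (((r^α : ℝ) : ℂ) * Complex.exp ((-s) * ↑r)))
      (fun r _ => by rw [hW]; ring), integral_const_mul]
    congr 1
    have hg := gamma_ray (a := α+1) (by linarith) hβ1 hβ2
    rw [show α+1-1 = α by ring] at hg
    rw [hs]
    exact hg
  -- the final tendsto of re
  have hfinal : Tendsto (fun ε => (Complex.exp (Complex.I * ↑θ) * G ε).re) (𝓝[>] (0:ℝ))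
      (𝓝 ((Complex.exp (Complex.I * ↑θ) * Glim).re)) :=
    (Complex.continuous_re.tendsto _).comp (hGtendsto.const_mul _)
  -- value simplification
  have hval : (Complex.exp (Complex.I * ↑θ) * Glim).re
      = Real.Gamma (α+1) * Real.sin (π * α / 2) := by
    rw [hGlim_eq]
    rw [show Complex.exp (Complex.I * ↑θ) * (-Complex.exp (Complex.I * ↑α * ↑θ) *
        (((Real.Gamma (α+1) : ℝ) : ℂ) * Complex.exp (-(((α+1 : ℝ):ℂ) * Complex.I * ↑β))))
        = ((-Real.Gamma (α+1) : ℝ) : ℂ) *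
          Complex.exp (Complex.I * ↑θ + Complex.I * ↑α * ↑θ + -(((α+1 : ℝ):ℂ) * Complex.I * ↑β))
        by rw [Complex.exp_add, Complex.exp_add]; push_cast; ring]
    rw [show Complex.I * ↑θ + Complex.I * ↑α * ↑θ + -(((α+1 : ℝ):ℂ) * Complex.I * ↑β)
        = (((α+1) * π / 2 : ℝ) : ℂ) * Complex.I by rw [hβdef]; push_cast; ring]
    rw [Complex.re_ofReal_mul, Complex.exp_ofReal_mul_I_re]
    rw [show (α+1) * π / 2 = α * π / 2 + π / 2 by ring, Real.cos_add_pi_div_two]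
    rw [show α * π / 2 = π * α / 2 by ring]
    ring
  rw [← hval]
  apply Tendsto.congr' _ hfinal
  -- eventual equality
  filter_upwards [self_mem_nhdsWithin] with ε hε
  rw [mem_Ioi] at hε
  -- integrability of the complex integrand on the real axis
  have hre_axis : ∀ u : ℝ, 0 ≤ u → ‖Complex.exp (Complex.I * ↑u - (ε:ℂ) * ((u^α : ℝ) : ℂ))‖
      = Real.exp (-(ε * u^α)) := by
    intro u hu
    rw [norm_cexp]
    congr 1
    simp [Complex.mul_re]
  have hint1 : IntegrableOn (fun u : ℝ =>
      Complex.exp (Complex.I * ↑u - (ε:ℂ) * ((u^α : ℝ) : ℂ))) (Ioi 0) := by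
    refine Integrable.mono' (intOn_exp_rpow hα hε) ?_ ?_
    · apply ContinuousOn.aestronglyMeasurable _ measurableSet_Ioi
      apply Complex.continuous_exp.comp_continuousOn
      apply ContinuousOn.sub
      · exact (continuous_const.mul Complex.continuous_ofReal).continuousOn
      apply ContinuousOn.mul continuousOn_const
      intro u hu
      exact (Complex.continuous_ofReal.continuousAt.comp
        (Real.continuousAt_rpow_const u α (Or.inl (ne_of_gt hu)))).continuousWithinAt
    · rw [ae_restrict_iff' measurableSet_Ioi]
      filter_upwards with u hu
      rw [hre_axis u (le_of_lt hu)]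
  -- step (ii) : real integral is re of the complex one
  have hre2 : ∫ u in Ioi (0:ℝ), Real.cos u * Real.exp (-(ε * u^α))
      = (∫ u in Ioi (0:ℝ), Complex.exp (Complex.I * ↑u - (ε:ℂ) * ((u^α : ℝ) : ℂ))).re := by
    calc ∫ u in Ioi (0:ℝ), Real.cos u * Real.exp (-(ε * u^α))
        = ∫ u in Ioi (0:ℝ), (Complex.exp (Complex.I * ↑u - (ε:ℂ) * ((u^α : ℝ) : ℂ))).re := by
          refine setIntegral_congr_fun measurableSet_Ioi (fun u _ => ?_)
          rw [Complex.exp_re]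
          have h1 : (Complex.I * ↑u - (ε:ℂ) * ((u^α : ℝ) : ℂ)).re = -(ε * u^α) := by
            simp [Complex.mul_re]
          have h2 : (Complex.I * ↑u - (ε:ℂ) * ((u^α : ℝ) : ℂ)).im = u := by
            simp [Complex.mul_im]
          rw [h1, h2, mul_comm]
      _ = (∫ u in Ioi (0:ℝ), Complex.exp (Complex.I * ↑u - (ε:ℂ) * ((u^α : ℝ) : ℂ))).re :=
          integral_re hint1
  -- step (iii) : rotate
  have hrot := rotate_main hα hε hθpos hθ2 hαθ
  -- step (iv) : split the rotated integral
  have hint2 : IntegrableOn (fun r : ℝ => Complex.exp ((-s) * ↑r)) (Ioi 0) := by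
    refine MeasureTheory.IntegrableOn.congr_fun (integrableOn_cexp_neg_smul (s := s)
      (by rw [hsre]; exact hcβ)) (fun r _ => by rw [neg_mul]) measurableSet_Ioi
  have hint3 : IntegrableOn (fun r : ℝ => Complex.exp ((-s) * ↑r) *
      (Complex.exp (-((ε:ℂ) * ((r^α : ℝ) : ℂ) * Complex.exp (Complex.I * ↑α * ↑θ))) - 1))
      (Ioi 0) := by
    refine Integrable.mono' ((intOn_rpow_exp_lin (q := α) (by linarith) hcβ).const_mul ε) ?_ ?_
    · apply ContinuousOn.aestronglyMeasurable _ measurableSet_Ioi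
      apply ContinuousOn.mul
      · exact (Complex.continuous_exp.comp
          (continuous_const.mul Complex.continuous_ofReal)).continuousOn
      apply ContinuousOn.sub _ continuousOn_const
      apply Complex.continuous_exp.comp_continuousOn
      apply ContinuousOn.neg
      apply ContinuousOn.mul _ continuousOn_const
      apply ContinuousOn.mul continuousOn_const
      intro r hr
      exact (Complex.continuous_ofReal.continuousAt.comp
        (Real.continuousAt_rpow_const r α (Or.inl (ne_of_gt hr)))).continuousWithinAt
    · rw [ae_restrict_iff' measurableSet_Ioi]
      filter_upwards with r hr
      rw [mem_Ioi] at hr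
      rw [norm_mul]
      have e1 : ‖Complex.exp ((-s) * ↑r)‖ = Real.exp (-(Real.cos β * r)) := by
        rw [norm_cexp, hs, re_ray]
      have e2 : ‖Complex.exp (-((ε:ℂ) * ((r^α : ℝ) : ℂ) * Complex.exp (Complex.I * ↑α * ↑θ)))
          - 1‖ ≤ ε * r ^ α := by
        have h1 := norm_exp_neg_sub_one_le (w := (ε:ℂ) * ((r^α : ℝ) : ℂ) *
          Complex.exp (Complex.I * ↑α * ↑θ)) (by
            rw [hBre ε r hr.le hε.le]
            positivity)
        refine le_trans h1 (le_of_eq ?_)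
        rw [show (ε:ℂ) * ((r^α : ℝ) : ℂ) * Complex.exp (Complex.I * ↑α * ↑θ)
            = (ε:ℂ) * W r by rw [hW]; ring]
        rw [norm_mul, Complex.norm_real, Real.norm_of_nonneg hε.le, hnW r hr.le]
      calc ‖Complex.exp ((-s) * ↑r)‖ *
            ‖Complex.exp (-((ε:ℂ) * ((r^α : ℝ) : ℂ) * Complex.exp (Complex.I * ↑α * ↑θ))) - 1‖
          ≤ Real.exp (-(Real.cos β * r)) * (ε * r ^ α) := by
            rw [e1]
            exact mul_le_mul_of_nonneg_left e2 (Real.exp_nonneg _)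
        _ = ε * (r ^ α * Real.exp (-(Real.cos β * r))) := by ring
  have hsplit : ∫ r in Ioi (0:ℝ), Complex.exp (Complex.I * Complex.exp (Complex.I * ↑θ) * ↑r
        - (ε:ℂ) * ((r^α : ℝ) : ℂ) * Complex.exp (Complex.I * ↑α * ↑θ))
      = (∫ r in Ioi (0:ℝ), Complex.exp ((-s) * ↑r) *
          (Complex.exp (-((ε:ℂ) * ((r^α : ℝ) : ℂ) * Complex.exp (Complex.I * ↑α * ↑θ))) - 1))
        + 1 / s := by
    have hintval : ∫ r in Ioi (0:ℝ), Complex.exp ((-s) * ↑r) = 1 / s := by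
      rw [setIntegral_congr_fun measurableSet_Ioi
        (g := fun r : ℝ => Complex.exp (-(s * ↑r))) (fun r _ => by rw [neg_mul])]
      exact integral_cexp_neg_smul (by rw [hsre]; exact hcβ)
    rw [← hintval, ← integral_add hint3 hint2]
    refine setIntegral_congr_fun measurableSet_Ioi (fun r _ => ?_)
    have harg : Complex.I * Complex.exp (Complex.I * ↑θ) * ↑r
        - (ε:ℂ) * ((r^α : ℝ) : ℂ) * Complex.exp (Complex.I * ↑α * ↑θ)
        = (-s) * ↑r + -((ε:ℂ) * ((r^α : ℝ) : ℂ) * Complex.exp (Complex.I * ↑α * ↑θ)) := by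
      rw [← hIcomb]; ring
    rw [harg, Complex.exp_add]
    ring
  -- assemble
  rw [hre2, hrot, hsplit]
  have hIdiv : Complex.exp (Complex.I * ↑θ) * (1 / s) = Complex.I := by
    have hsval : s = -(Complex.I * Complex.exp (Complex.I * ↑θ)) := by
      rw [hIcomb]; ring
    rw [hsval]
    have hne : Complex.I * Complex.exp (Complex.I * ↑θ) ≠ 0 :=
      mul_ne_zero Complex.I_ne_zero (Complex.exp_ne_zero _)
    rw [one_div, eq_comm]
    rw [show -(Complex.I * Complex.exp (Complex.I * ↑θ)) = (-Complex.I) *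
      Complex.exp (Complex.I * ↑θ) by ring, mul_inv]
    rw [show (-Complex.I)⁻¹ = Complex.I from inv_eq_of_mul_eq_one_right (by
      rw [show -Complex.I * Complex.I = -(Complex.I * Complex.I) by ring, Complex.I_mul_I]
      norm_num)]
    rw [show Complex.exp (Complex.I * ↑θ) * (Complex.I * (Complex.exp (Complex.I * ↑θ))⁻¹)
      = Complex.I * (Complex.exp (Complex.I * ↑θ) * (Complex.exp (Complex.I * ↑θ))⁻¹) by ring,
      mul_inv_cancel₀ (Complex.exp_ne_zero _), mul_one]
  rw [mul_add, hIdiv, Complex.add_re, Complex.I_re, add_zero]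
  rw [hG]
  simp only
  have hmove : (∫ r in Ioi (0:ℝ), Complex.exp (-s * ↑r) *
      ((↑ε)⁻¹ * (Complex.exp (-(↑ε * ((r^α : ℝ):ℂ) * Complex.exp (Complex.I * ↑α * ↑θ))) - 1)))
      = ((ε:ℂ))⁻¹ * ∫ r in Ioi (0:ℝ), Complex.exp (-s * ↑r) *
        (Complex.exp (-(↑ε * ((r^α : ℝ):ℂ) * Complex.exp (Complex.I * ↑α * ↑θ))) - 1) := by
    rw [← integral_const_mul]
    exact setIntegral_congr_fun measurableSet_Ioi (fun r _ => by ring)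
  rw [hmove]
  rw [show Complex.exp (Complex.I * ↑θ) * (((ε:ℂ))⁻¹ * ∫ r in Ioi (0:ℝ),
      Complex.exp (-s * ↑r) *
        (Complex.exp (-(↑ε * ((r^α : ℝ):ℂ) * Complex.exp (Complex.I * ↑α * ↑θ))) - 1))
      = ((ε⁻¹ : ℝ) : ℂ) * (Complex.exp (Complex.I * ↑θ) * ∫ r in Ioi (0:ℝ),
      Complex.exp (-s * ↑r) *
        (Complex.exp (-(↑ε * ((r^α : ℝ):ℂ) * Complex.exp (Complex.I * ↑α * ↑θ))) - 1))
      by push_cast; ring]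
  rw [Complex.re_ofReal_mul]



/-- For every `α ∈ (0,2)`, `lim_{x→∞} x^{α+1} · f_α(x) = α · sin(πα/2)·Γ(α)/π`. -/
theorem stable_density_tail_asymptotics (α : ℝ) (hα : 0 < α) (hα2 : α < 2) :
    Tendsto (fun x : ℝ => x ^ (α + 1) * stableDensity α x) atTop
      (𝓝 (α * (Real.sin (π * α / 2) * Real.Gamma α / π))) := by
  have hπ := Real.pi_pos
  have hΦ := main_limit hα
  have hcomp : Tendsto (fun x : ℝ => x ^ (-α)) atTop (𝓝[>] (0:ℝ)) := by
    apply tendsto_nhdsWithin_of_tendsto_nhds_of_eventually_within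
    · exact tendsto_rpow_neg_atTop hα
    · filter_upwards [eventually_gt_atTop (0:ℝ)] with x hx
      exact Real.rpow_pos_of_pos hx _
  have h2 := hΦ.comp hcomp
  have h3 := h2.const_mul (1/π)
  have hlim_eq : (1/π) * (Real.Gamma (α+1) * Real.sin (π * α / 2))
      = α * (Real.sin (π * α / 2) * Real.Gamma α / π) := by
    rw [Real.Gamma_add_one hα.ne']
    field_simp
  rw [hlim_eq] at h3
  apply Tendsto.congr' _ h3
  filter_upwards [eventually_gt_atTop (0:ℝ)] with x hx
  simp only [Function.comp_apply]
  -- change of variables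
  have hsub : ∫ t in Ioi (0:ℝ), Real.cos (x * t) * Real.exp (-(t ^ α))
      = x⁻¹ * ∫ u in Ioi (0:ℝ), Real.cos u * Real.exp (-(x ^ (-α) * u ^ α)) := by
    have h0 := integral_comp_mul_left_Ioi
      (g := fun u : ℝ => Real.cos u * Real.exp (-(x ^ (-α) * u ^ α))) 0 hx
    rw [mul_zero] at h0
    calc ∫ t in Ioi (0:ℝ), Real.cos (x * t) * Real.exp (-(t ^ α))
        = ∫ t in Ioi (0:ℝ), Real.cos (x * t) * Real.exp (-(x ^ (-α) * (x * t) ^ α)) := by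
          refine setIntegral_congr_fun measurableSet_Ioi (fun t ht => ?_)
          rw [mem_Ioi] at ht
          congr 2
          rw [Real.mul_rpow hx.le ht.le, ← mul_assoc, ← Real.rpow_add hx,
            neg_add_cancel, Real.rpow_zero, one_mul]
      _ = x⁻¹ * ∫ u in Ioi (0:ℝ), Real.cos u * Real.exp (-(x ^ (-α) * u ^ α)) := by
          simpa [smul_eq_mul] using h0
  have hxα : (x ^ (-α) : ℝ)⁻¹ = x ^ α := by
    rw [Real.rpow_neg hx.le, inv_inv]
  rw [stableDensity, hsub, hxα]
  have hxα1 : x ^ (α + 1) = x ^ α * x := by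
    rw [Real.rpow_add_one hx.ne' α]
  rw [hxα1]
  field_simp
end

section
/- Let α > 0 and c > 0, let F̄ : ℝ → ℝ and Q̄ : (0,1) → ℝ be functions such that Q̄(p) → ∞ as p → 0⁺, F̄(Q̄(p)) = p for all p in some right neighbourhood (0,ε) of 0, and lim_{x→∞} x^α · F̄(x) = c. Then lim_{p→0⁺} p^{1/α} · Q̄(p) = c^{1/α}. -/
open Real Filter Set Topology

/-- Let `α > 0`, `c > 0`, and let `F̄ : ℝ → ℝ`, `Q̄ : ℝ → ℝ` (with `Q̄` playing the role of a
function on `(0,1)`) be such that `Q̄(p) → ∞` as `p → 0⁺`, `F̄(Q̄(p)) = p` for all `p` in some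
right neighbourhood `(0,ε)` of `0`, and `lim_{x→∞} x^α · F̄(x) = c`. Then
`lim_{p→0⁺} p^{1/α} · Q̄(p) = c^{1/α}`. -/
theorem tail_inverse_asymptotics (α c : ℝ) (hα : 0 < α) (hc : 0 < c)
    (Fbar Qbar : ℝ → ℝ)
    (hQtop : Tendsto Qbar (𝓝[>] (0 : ℝ)) atTop)
    (hFQ : ∃ ε > (0 : ℝ), ∀ p ∈ Set.Ioo (0 : ℝ) ε, Fbar (Qbar p) = p)
    (hF : Tendsto (fun x : ℝ => x ^ α * Fbar x) atTop (𝓝 c)) :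
    Tendsto (fun p : ℝ => p ^ (1 / α) * Qbar p) (𝓝[>] (0 : ℝ)) (𝓝 (c ^ (1 / α))) := by
  obtain ⟨ε, hε, hεFQ⟩ := hFQ
  -- (Qbar p)^α * p → c as p → 0⁺
  have h1 : Tendsto (fun p : ℝ => Qbar p ^ α * p) (𝓝[>] (0 : ℝ)) (𝓝 c) := by
    have hcomp := hF.comp hQtop
    refine hcomp.congr' ?_
    filter_upwards [Ioo_mem_nhdsGT_of_mem (by constructor <;> simp [hε] : (0:ℝ) ∈ Ico 0 ε)]
      with p hp
    simp [Function.comp, hεFQ p hp]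
  -- apply x ↦ x^(1/α)
  have h2 : Tendsto (fun p : ℝ => (Qbar p ^ α * p) ^ (1 / α)) (𝓝[>] (0 : ℝ))
      (𝓝 (c ^ (1 / α))) :=
    (Real.continuousAt_rpow_const c (1 / α) (Or.inl hc.ne')).tendsto.comp h1
  refine h2.congr' ?_
  filter_upwards [hQtop.eventually_ge_atTop 0, self_mem_nhdsWithin] with p hQ hp
  rw [Real.mul_rpow (Real.rpow_nonneg hQ α) (le_of_lt hp), ← Real.rpow_mul hQ]
  · rw [mul_one_div, div_self hα.ne', Real.rpow_one, mul_comm]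
end

section
/- Let 0 < a < b < 1 and let Q₁, Q₂ : [a,b] → ℝ be strictly increasing functions such that Q₁ − Q₂ is strictly increasing on [a,b]. Then V(Q₁) > V(Q₂), where for a function Q the quantile-variance functional is V(Q) = (1/(b−a)) ∫_a^b Q(p)² dp − ((1/(b−a)) ∫_a^b Q(p) dp)². -/
open Real Set

/-- Product of two monotone functions on `[a,b]` is interval integrable. -/
lemma mulMonoIntervalIntegrable {a b : ℝ} (hab : a ≤ b) {u v : ℝ → ℝ}
    (hu : MonotoneOn u (Set.Icc a b)) (hv : MonotoneOn v (Set.Icc a b)) :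
    IntervalIntegrable (fun x => u x * v x) MeasureTheory.volume a b := by
  set K : ℝ := max (-(u a)) (-(v a)) with hK
  have hmem : a ∈ Set.Icc a b := ⟨le_rfl, hab⟩
  have hKu : -(u a) ≤ K := by rw [hK]; exact le_max_left _ _
  have hKv : -(v a) ≤ K := by rw [hK]; exact le_max_right _ _
  have hu0 : ∀ x ∈ Set.Icc a b, 0 ≤ u x + K := by
    intro x hx
    have h1 : u a ≤ u x := hu hmem hx hx.1
    linarith
  have hv0 : ∀ x ∈ Set.Icc a b, 0 ≤ v x + K := by
    intro x hx
    have h1 : v a ≤ v x := hv hmem hx hx.1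
    linarith
  have hmono : MonotoneOn (fun x => (u x + K) * (v x + K)) (Set.Icc a b) := by
    intro x hx y hy hxy
    have h1 : u x + K ≤ u y + K := by have := hu hx hy hxy; linarith
    have h2 : v x + K ≤ v y + K := by have := hv hx hy hxy; linarith
    exact mul_le_mul h1 h2 (hv0 x hx) (by linarith [hu0 y hy])
  have huI : IntervalIntegrable u MeasureTheory.volume a b := by
    apply MonotoneOn.intervalIntegrable; rwa [Set.uIcc_of_le hab]
  have hvI : IntervalIntegrable v MeasureTheory.volume a b := by
    apply MonotoneOn.intervalIntegrable; rwa [Set.uIcc_of_le hab]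
  have hpI : IntervalIntegrable (fun x => (u x + K) * (v x + K))
      MeasureTheory.volume a b := by
    apply MonotoneOn.intervalIntegrable; rwa [Set.uIcc_of_le hab]
  have heq : (fun x => u x * v x) =
      fun x => (u x + K) * (v x + K) - K * u x - K * v x - K * K := by
    funext x; ring
  rw [heq]
  exact ((hpI.sub (huI.const_mul K)).sub (hvI.const_mul K)).sub intervalIntegrable_const

/-- Let `0 < a < b < 1` and let `Q₁, Q₂ : [a,b] → ℝ` be strictly increasing with `Q₁ − Q₂`
strictly increasing on `[a,b]`. Then `V(Q₁) > V(Q₂)`, where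
`V(Q) = (1/(b−a)) ∫_a^b Q(p)² dp − ((1/(b−a)) ∫_a^b Q(p) dp)²`. -/
theorem quantile_variance_functional_lt (a b : ℝ) (ha : 0 < a) (hab : a < b) (hb : b < 1)
    (Q₁ Q₂ : ℝ → ℝ)
    (hQ₁ : StrictMonoOn Q₁ (Set.Icc a b)) (hQ₂ : StrictMonoOn Q₂ (Set.Icc a b))
    (hdiff : StrictMonoOn (fun p => Q₁ p - Q₂ p) (Set.Icc a b)) :
    (1 / (b - a)) * (∫ p in a..b, (Q₁ p) ^ 2) -
        ((1 / (b - a)) * ∫ p in a..b, Q₁ p) ^ 2 >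
      (1 / (b - a)) * (∫ p in a..b, (Q₂ p) ^ 2) -
        ((1 / (b - a)) * ∫ p in a..b, Q₂ p) ^ 2 := by
  have hab' : a ≤ b := hab.le
  have hba : 0 < b - a := by linarith
  set g : ℝ → ℝ := fun p => Q₁ p - Q₂ p with hg
  set h : ℝ → ℝ := fun p => Q₁ p + Q₂ p with hh
  have hgs : StrictMonoOn g (Set.Icc a b) := hdiff
  have hhs : StrictMonoOn h (Set.Icc a b) := fun x hx y hy hxy =>
    add_lt_add (hQ₁ hx hy hxy) (hQ₂ hx hy hxy)
  have hgm : MonotoneOn g (Set.Icc a b) := hgs.monotoneOn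
  have hhm : MonotoneOn h (Set.Icc a b) := hhs.monotoneOn
  have hgI : IntervalIntegrable g MeasureTheory.volume a b := by
    apply MonotoneOn.intervalIntegrable; rwa [Set.uIcc_of_le hab']
  have hhI : IntervalIntegrable h MeasureTheory.volume a b := by
    apply MonotoneOn.intervalIntegrable; rwa [Set.uIcc_of_le hab']
  have hQ1I : IntervalIntegrable Q₁ MeasureTheory.volume a b := by
    apply MonotoneOn.intervalIntegrable; rw [Set.uIcc_of_le hab']; exact hQ₁.monotoneOn
  have hQ2I : IntervalIntegrable Q₂ MeasureTheory.volume a b := by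
    apply MonotoneOn.intervalIntegrable; rw [Set.uIcc_of_le hab']; exact hQ₂.monotoneOn
  have hQ1sqI : IntervalIntegrable (fun p => (Q₁ p) ^ 2) MeasureTheory.volume a b := by
    have := mulMonoIntervalIntegrable hab' hQ₁.monotoneOn hQ₁.monotoneOn
    simpa [pow_two] using this
  have hQ2sqI : IntervalIntegrable (fun p => (Q₂ p) ^ 2) MeasureTheory.volume a b := by
    have := mulMonoIntervalIntegrable hab' hQ₂.monotoneOn hQ₂.monotoneOn
    simpa [pow_two] using this
  have hghI : IntervalIntegrable (fun p => g p * h p) MeasureTheory.volume a b :=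
    mulMonoIntervalIntegrable hab' hgm hhm
  -- the mean of h
  set m : ℝ := (∫ p in a..b, h p) / (b - a) with hm
  have hint_m : (∫ p in a..b, h p) = m * (b - a) := by
    rw [hm]; field_simp
  -- h a ≤ m
  have hham : h a ≤ m := by
    have h1 : (∫ p in a..b, (fun _ => h a) p) ≤ ∫ p in a..b, h p := by
      apply intervalIntegral.integral_mono_on hab' intervalIntegrable_const hhI
      intro x hx; exact hhm ⟨le_rfl, hab'⟩ hx hx.1
    rw [intervalIntegral.integral_const, smul_eq_mul] at h1
    rw [hm, le_div_iff₀ hba]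
    linarith
  -- crossing point c
  set S : Set ℝ := {x ∈ Set.Icc a b | h x ≤ m} with hS
  have hSne : S.Nonempty := ⟨a, ⟨le_rfl, hab'⟩, hham⟩
  have hSbdd : BddAbove S := ⟨b, fun x hx => hx.1.2⟩
  set c : ℝ := sSup S with hc
  have hca : a ≤ c := le_csSup hSbdd ⟨⟨le_rfl, hab'⟩, hham⟩
  have hcb : c ≤ b := csSup_le hSne fun x hx => hx.1.2
  have hcmem : c ∈ Set.Icc a b := ⟨hca, hcb⟩
  have P1 : ∀ x ∈ Set.Icc a b, m < h x → c ≤ x := by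
    intro x hx hmx
    by_contra hxc
    push_neg at hxc
    obtain ⟨s, hsS, hxs⟩ := exists_lt_of_lt_csSup hSne hxc
    have : h x < h s := hhs hx hsS.1 hxs
    linarith [hsS.2]
  have P2 : ∀ x ∈ Set.Icc a b, h x ≤ m → x ≤ c := fun x hx hxm =>
    le_csSup hSbdd ⟨hx, hxm⟩
  -- the nonnegative function F
  set F : ℝ → ℝ := fun x => (g x - g c) * (h x - m) with hF
  have hFnonneg : ∀ x ∈ Set.Icc a b, 0 ≤ F x := by
    intro x hx
    rcases le_or_gt (h x) m with hle | hlt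
    · have hxc : x ≤ c := P2 x hx hle
      have h1 : g x ≤ g c := hgm hx hcmem hxc
      show 0 ≤ (g x - g c) * (h x - m)
      nlinarith
    · have hcx : c ≤ x := P1 x hx hlt
      have h1 : g c ≤ g x := hgm hcmem hx hcx
      show 0 ≤ (g x - g c) * (h x - m)
      nlinarith
  -- existence of p ∈ Ico a b with m < h p
  have hexp : ∃ p ∈ Set.Ico a b, m < h p := by
    by_contra hno
    push_neg at hno
    set s : ℝ := (a + b) / 2 with hs
    have hsa : a < s := by rw [hs]; linarith
    have hsb : s < b := by rw [hs]; linarith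
    have hsab : s ∈ Set.Icc a b := ⟨hsa.le, hsb.le⟩
    set s' : ℝ := (s + b) / 2 with hs'
    have hss' : s < s' := by rw [hs']; linarith
    have hs'b : s' < b := by rw [hs']; linarith
    have hs'mem : s' ∈ Set.Icc a b := ⟨by linarith [hsa.le, hss'.le], hs'b.le⟩
    have hsm : h s < m :=
      lt_of_lt_of_le (hhs hsab hs'mem hss') (hno s' ⟨hs'mem.1, hs'b⟩)
    have hhI1 : IntervalIntegrable h MeasureTheory.volume a s :=
      hhI.mono_set (by rw [Set.uIcc_of_le hsa.le, Set.uIcc_of_le hab']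
                       exact Set.Icc_subset_Icc le_rfl hsb.le)
    have hhI2 : IntervalIntegrable h MeasureTheory.volume s b :=
      hhI.mono_set (by rw [Set.uIcc_of_le hsb.le, Set.uIcc_of_le hab']
                       exact Set.Icc_subset_Icc hsa.le le_rfl)
    have hup1 : (∫ x in a..s, h x) ≤ (s - a) * h s := by
      have h1 := intervalIntegral.integral_mono_on hsa.le hhI1 intervalIntegrable_const
        (fun x hx => hhm ⟨hx.1, le_trans hx.2 hsb.le⟩ hsab hx.2)
      rwa [intervalIntegral.integral_const, smul_eq_mul] at h1
    have hb0 : (MeasureTheory.volume.restrict (Set.Icc s b)) {b} = 0 := by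
      rw [MeasureTheory.Measure.restrict_apply (measurableSet_singleton b)]
      refine le_antisymm (le_trans (MeasureTheory.measure_mono Set.inter_subset_left) ?_)
        zero_le
      simp
    have hae : ∀ᵐ x ∂(MeasureTheory.volume.restrict (Set.Icc s b)), h x ≤ m := by
      have h1 : ∀ᵐ x ∂(MeasureTheory.volume.restrict (Set.Icc s b)), x ∈ Set.Icc s b :=
        MeasureTheory.ae_restrict_mem measurableSet_Icc
      have h2 : ∀ᵐ x ∂(MeasureTheory.volume.restrict (Set.Icc s b)), x ≠ b := by
        rw [MeasureTheory.ae_iff]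
        convert hb0 using 2
        ext x; simp
      filter_upwards [h1, h2] with x hx hxb
      exact hno x ⟨le_trans hsa.le hx.1, lt_of_le_of_ne hx.2 hxb⟩
    have hup2 : (∫ x in s..b, h x) ≤ (b - s) * m := by
      have h1 := intervalIntegral.integral_mono_ae_restrict hsb.le hhI2
        intervalIntegrable_const hae
      rwa [intervalIntegral.integral_const, smul_eq_mul] at h1
    have hsplit : (∫ x in a..s, h x) + (∫ x in s..b, h x) = ∫ x in a..b, h x :=
      intervalIntegral.integral_add_adjacent_intervals hhI1 hhI2
    have h1 : (s - a) * h s < (s - a) * m := by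
      apply mul_lt_mul_of_pos_left hsm; linarith
    have : (∫ x in a..b, h x) < m * (b - a) := by nlinarith
    rw [hint_m] at this
    linarith
  obtain ⟨p, hp, hpm⟩ := hexp
  have hpmem : p ∈ Set.Icc a b := ⟨hp.1, hp.2.le⟩
  set q : ℝ := (p + b) / 2 with hq
  have hpq : p < q := by rw [hq]; linarith [hp.2]
  have hqb : q < b := by rw [hq]; linarith [hp.2]
  have hqmem : q ∈ Set.Icc a b := ⟨le_trans hp.1 hpq.le, hqb.le⟩
  have hcp : c ≤ p := P1 p hpmem hpm
  have hgqc : g c < g q := hgs hcmem hqmem (lt_of_le_of_lt hcp hpq)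
  have hhqm : m < h q := lt_trans hpm (hhs hpmem hqmem hpq)
  -- integrability of F
  have hum : MonotoneOn (fun x => g x - g c) (Set.Icc a b) := fun x hx y hy hxy =>
    sub_le_sub_right (hgm hx hy hxy) _
  have hvm : MonotoneOn (fun x => h x - m) (Set.Icc a b) := fun x hx y hy hxy =>
    sub_le_sub_right (hhm hx hy hxy) _
  have hFI : IntervalIntegrable F MeasureTheory.volume a b :=
    mulMonoIntervalIntegrable hab' hum hvm
  have hFI1 : IntervalIntegrable F MeasureTheory.volume a q :=
    hFI.mono_set (by rw [Set.uIcc_of_le hqmem.1, Set.uIcc_of_le hab']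
                     exact Set.Icc_subset_Icc le_rfl hqmem.2)
  have hFI2 : IntervalIntegrable F MeasureTheory.volume q b :=
    hFI.mono_set (by rw [Set.uIcc_of_le hqb.le, Set.uIcc_of_le hab']
                     exact Set.Icc_subset_Icc hqmem.1 le_rfl)
  have hsplitF : (∫ x in a..q, F x) + (∫ x in q..b, F x) = ∫ x in a..b, F x :=
    intervalIntegral.integral_add_adjacent_intervals hFI1 hFI2
  have hnn : 0 ≤ ∫ x in a..q, F x :=
    intervalIntegral.integral_nonneg hqmem.1
      (fun x hx => hFnonneg x ⟨hx.1, le_trans hx.2 hqmem.2⟩)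
  set d : ℝ := (g q - g c) * (h q - m) with hd
  have hdpos : 0 < d := mul_pos (by linarith) (by linarith)
  have hbound : ∀ x ∈ Set.Icc q b, d ≤ F x := by
    intro x hx
    have hxmem : x ∈ Set.Icc a b := ⟨le_trans hqmem.1 hx.1, hx.2⟩
    have h1 : g q ≤ g x := hgm hqmem hxmem hx.1
    have h2 : h q ≤ h x := hhm hqmem hxmem hx.1
    show (g q - g c) * (h q - m) ≤ (g x - g c) * (h x - m)
    exact mul_le_mul (by linarith) (by linarith) (by linarith) (by linarith)
  have hlow : (b - q) * d ≤ ∫ x in q..b, F x := by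
    have h1 := intervalIntegral.integral_mono_on (f := fun _ => d) hqb.le
      intervalIntegrable_const hFI2 hbound
    rwa [intervalIntegral.integral_const, smul_eq_mul] at h1
  have hFpos : 0 < ∫ x in a..b, F x := by
    rw [← hsplitF]
    have h1 : 0 < (b - q) * d := mul_pos (by linarith) hdpos
    linarith
  -- algebraic identities
  have e2 : (∫ p in a..b, (Q₁ p) ^ 2) - (∫ p in a..b, (Q₂ p) ^ 2) = ∫ p in a..b, g p * h p := by
    rw [← intervalIntegral.integral_sub hQ1sqI hQ2sqI]
    apply intervalIntegral.integral_congr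
    intro x _
    simp only [hg, hh]
    ring
  have eG : (∫ p in a..b, Q₁ p) - (∫ p in a..b, Q₂ p) = ∫ p in a..b, g p :=
    (intervalIntegral.integral_sub hQ1I hQ2I).symm
  have eH : (∫ p in a..b, Q₁ p) + (∫ p in a..b, Q₂ p) = ∫ p in a..b, h p :=
    (intervalIntegral.integral_add hQ1I hQ2I).symm
  have hA : (∫ p in a..b, Q₁ p) ^ 2 - (∫ p in a..b, Q₂ p) ^ 2 =
      (∫ p in a..b, g p) * (∫ p in a..b, h p) := by
    linear_combination ((∫ p in a..b, Q₁ p) + (∫ p in a..b, Q₂ p)) * eG +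
      (∫ p in a..b, g p) * eH
  have haux : IntervalIntegrable (fun x => m * g x + (g c * h x - g c * m))
      MeasureTheory.volume a b :=
    (hgI.const_mul m).add ((hhI.const_mul (g c)).sub intervalIntegrable_const)
  have e1 : (∫ p in a..b, F p) =
      (∫ p in a..b, g p * h p) - m * (∫ p in a..b, g p) := by
    have step1 : (∫ p in a..b, F p) =
        ∫ p in a..b, (g p * h p - (m * g p + (g c * h p - g c * m))) := by
      apply intervalIntegral.integral_congr
      intro x _
      simp only [hF]
      ring
    rw [step1, intervalIntegral.integral_sub hghI haux,
      intervalIntegral.integral_add (hgI.const_mul m)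
        ((hhI.const_mul (g c)).sub intervalIntegrable_const),
      intervalIntegral.integral_sub (hhI.const_mul (g c)) intervalIntegrable_const,
      intervalIntegral.integral_const_mul, intervalIntegral.integral_const_mul,
      intervalIntegral.integral_const, hint_m]
    simp only [smul_eq_mul]
    ring
  rw [gt_iff_lt, ← sub_pos]
  have key : (1 / (b - a)) * (∫ p in a..b, (Q₁ p) ^ 2) -
        ((1 / (b - a)) * ∫ p in a..b, Q₁ p) ^ 2 -
      ((1 / (b - a)) * (∫ p in a..b, (Q₂ p) ^ 2) -
        ((1 / (b - a)) * ∫ p in a..b, Q₂ p) ^ 2) =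
      (1 / (b - a)) * (∫ p in a..b, F p) := by
    rw [e1]
    linear_combination (1 / (b - a)) * e2 - (1 / (b - a)) ^ 2 * hA
  rw [key]
  exact mul_pos (one_div_pos.mpr hba) hFpos
end
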